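/- For a connected graph G of order n ≥ 2 and k ∈ {1,2} with k ≤ 𝔡(G), pd_k(G) = n if and only if 𝔡*(G) ≤ k + 1. -/

import Mathlib

/-!
If a part `A` of a partition contains two vertices `a ≠ b`, then `A` does not distinguish them,
and each part that does contains a vertex of `𝒟(a, b) \ {a, b}`; as parts are disjoint, at most
`|𝒟(a, b)| - 2 ≤ 𝔡* - 2` parts distinguish `a` and `b`. So when `𝔡* ≤ k + 1` every `k`-partition
generator is discrete, and the discrete partition is one because `k ≤ 𝔡`. Conversely, if
`|𝒟(x, y)| ≥ k + 2`, merging `x` and `y` into one part keeps a `k`-partition generator (this is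
where `k ≤ 2` enters) with `n - 1` parts.
-/

open SimpleGraph Finset

/-- Distance from a vertex to a finite set of vertices:
`min_{w ∈ S} d(u, w)`. -/
noncomputable def setDist {V : Type*} (G : SimpleGraph V) (u : V) (S : Finset V) : ℕ :=
  sInf (G.dist u '' (S : Set V))

/-- The set `𝒟_G(x,y)` of vertices distinguishing `x` and `y`. -/
noncomputable def DG {V : Type*} (G : SimpleGraph V) [Fintype V] (x y : V) : Finset V :=
  Finset.univ.filter fun z => G.dist z x ≠ G.dist z y

/-- `𝔡(G) = min_{x ≠ y} |𝒟_G(x,y)|`. -/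
noncomputable def frakd {V : Type*} (G : SimpleGraph V) [Fintype V] : ℕ :=
  sInf {m | ∃ x y : V, x ≠ y ∧ (DG G x y).card = m}

/-- `𝔡*(G) = max_{x ≠ y} |𝒟_G(x,y)|`. -/
noncomputable def frakdStar {V : Type*} (G : SimpleGraph V) [Fintype V] : ℕ :=
  sSup {m | ∃ x y : V, x ≠ y ∧ (DG G x y).card = m}

/-- A partition of the vertex set is a `k`-partition generator if every pair of
distinct vertices is distinguished by at least `k` parts. -/
noncomputable def IsKPartitionGenerator {V : Type*} (G : SimpleGraph V) [Fintype V]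
    [DecidableEq V] (k : ℕ) (P : Finpartition (Finset.univ : Finset V)) : Prop :=
  ∀ u v : V, u ≠ v → k ≤ (P.parts.filter fun S => setDist G u S ≠ setDist G v S).card

/-- The `k`-partition dimension `pd_k(G)`. -/
noncomputable def pd {V : Type*} (G : SimpleGraph V) [Fintype V] [DecidableEq V] (k : ℕ) : ℕ :=
  sInf {m | ∃ P : Finpartition (Finset.univ : Finset V),
    IsKPartitionGenerator G k P ∧ P.parts.card = m}

/-- A set of vertices is a `k`-metric generator if every pair of distinct
vertices is distinguished by at least `k` of its vertices. -/
def IsKMetricGenerator {V : Type*} (G : SimpleGraph V) [Fintype V] (k : ℕ) (W : Finset V) : Prop :=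
  ∀ u v : V, u ≠ v → k ≤ (W.filter fun z => G.dist z u ≠ G.dist z v).card

/-- The `k`-metric dimension `dim_k(G)`. -/
noncomputable def metricDim {V : Type*} (G : SimpleGraph V) [Fintype V] (k : ℕ) : ℕ :=
  sInf {m | ∃ W : Finset V, IsKMetricGenerator G k W ∧ W.card = m}

namespace Finpartition

variable {α : Type*} [DecidableEq α]

theorem card_filter_le_of_forall_exists_mem {s : Finset α} (P : Finpartition s)
    {p : Finset α → Prop} [DecidablePred p] {T : Finset α}
    (h : ∀ S ∈ P.parts, p S → ∃ z ∈ T, z ∈ S) : #(P.parts.filter p) ≤ #T :=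
  card_le_card_of_surjOn P.part fun S hS => by
    obtain ⟨hSP, hpS⟩ := mem_filter.1 hS
    obtain ⟨z, hzT, hzS⟩ := h S hSP hpS
    exact ⟨z, hzT, P.part_eq_of_mem hSP hzS⟩

theorem card_parts_eq_of_forall_card_le_one {s : Finset α} (P : Finpartition s)
    (h : ∀ A ∈ P.parts, #A ≤ 1) : #P.parts = #s := by
  rw [← P.sum_card_parts,
    sum_const_nat fun A hA => le_antisymm (h A hA) (P.nonempty_of_mem_parts hA).card_pos,
    mul_one]

variable [Fintype α]

def blockAndSingletons (B : Finset α) (hB : B.Nonempty) : Finpartition (univ : Finset α) :=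
  (⊥ : Finpartition (univ \ B)).extend hB.ne_empty disjoint_sdiff_self_left
    (sdiff_sup_cancel (subset_univ B))

variable {B : Finset α} {hB : B.Nonempty}

theorem singleton_mem_blockAndSingletons {z : α} (hz : z ∉ B) :
    {z} ∈ (blockAndSingletons B hB).parts :=
  mem_insert_of_mem (mem_bot_iff.2 ⟨z, mem_sdiff.2 ⟨mem_univ z, hz⟩, rfl⟩)

theorem card_blockAndSingletons :
    #(blockAndSingletons B hB).parts = Fintype.card α - #B + 1 := by
  rw [blockAndSingletons, card_extend, card_bot, card_univ_sdiff]

end Finpartition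

section Graph

variable {V : Type*} {G : SimpleGraph V}

theorem setDist_singleton (u z : V) : setDist G u {z} = G.dist u z := by
  simp [setDist]

theorem setDist_eq_zero_of_mem {u : V} {S : Finset V} (hu : u ∈ S) : setDist G u S = 0 :=
  Nat.sInf_eq_zero.2 (Or.inl ⟨u, hu, dist_self⟩)

theorem setDist_ne_of_mem_of_notMem (hG : G.Connected) {u v : V} {S : Finset V}
    (hu : u ∈ S) (hv : v ∉ S) : setDist G u S ≠ setDist G v S := by
  rw [setDist_eq_zero_of_mem hu, ne_comm]
  intro h
  rcases Nat.sInf_eq_zero.1 h with ⟨w, hw, hvw⟩ | hempty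
  · exact hv (hG.dist_eq_zero_iff.1 hvw ▸ hw)
  · exact (Set.image_nonempty.2 ⟨u, hu⟩).ne_empty hempty

theorem exists_dist_ne_of_setDist_ne {u v : V} {S : Finset V}
    (h : setDist G u S ≠ setDist G v S) : ∃ z ∈ S, G.dist z u ≠ G.dist z v := by
  by_contra! hS
  exact h (congrArg sInf (Set.image_congr fun z hz => by
    rw [dist_comm, hS z hz, dist_comm]))

variable [Fintype V]

theorem mem_DG {x y z : V} : z ∈ DG G x y ↔ G.dist z x ≠ G.dist z y := by
  simp [DG]

theorem frakd_le_card_DG {x y : V} (hxy : x ≠ y) : frakd G ≤ #(DG G x y) :=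
  Nat.sInf_le ⟨x, y, hxy, rfl⟩

theorem bddAbove_card_DG : BddAbove {m | ∃ x y : V, x ≠ y ∧ #(DG G x y) = m} :=
  ⟨Fintype.card V, by rintro m ⟨x, y, -, rfl⟩; exact card_le_univ _⟩

theorem card_DG_le_frakdStar {x y : V} (hxy : x ≠ y) : #(DG G x y) ≤ frakdStar G :=
  le_csSup bddAbove_card_DG ⟨x, y, hxy, rfl⟩

theorem exists_card_DG_eq_frakdStar (h : frakdStar G ≠ 0) :
    ∃ x y : V, x ≠ y ∧ #(DG G x y) = frakdStar G := by
  refine Nat.sSup_mem (Set.nonempty_iff_ne_empty.2 fun hempty => h ?_) bddAbove_card_DG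
  rw [frakdStar, hempty, csSup_empty, bot_eq_zero]

variable [DecidableEq V]

theorem pair_subset_DG (hG : G.Connected) {x y : V} (hxy : x ≠ y) : {x, y} ⊆ DG G x y := by
  intro z hz
  rw [mem_DG]
  rcases mem_insert.1 hz with rfl | hz
  · rw [dist_self]
    exact (hG.pos_dist_of_ne hxy).ne
  · rw [mem_singleton.1 hz, dist_self]
    exact (hG.pos_dist_of_ne hxy.symm).ne'

variable (G) in
noncomputable def distinguishingParts (P : Finpartition (univ : Finset V)) (u v : V) :
    Finset (Finset V) :=
  P.parts.filter fun S => setDist G u S ≠ setDist G v S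

variable {P : Finpartition (univ : Finset V)} {k : ℕ}

theorem isKPartitionGenerator_iff :
    IsKPartitionGenerator G k P ↔ ∀ u v, u ≠ v → k ≤ #(distinguishingParts G P u v) :=
  Iff.rfl

theorem distinguishingParts_comm (u v : V) :
    distinguishingParts G P u v = distinguishingParts G P v u :=
  filter_congr fun _ _ => ne_comm

theorem card_distinguishingParts_le (hG : G.Connected) {A : Finset V} (hA : A ∈ P.parts)
    {a b : V} (hab : a ≠ b) (ha : a ∈ A) (hb : b ∈ A) :
    #(distinguishingParts G P a b) ≤ #(DG G a b) - 2 := by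
  rw [← card_pair hab, ← card_sdiff_of_subset (pair_subset_DG hG hab)]
  refine P.card_filter_le_of_forall_exists_mem fun S hS hdist => ?_
  obtain ⟨z, hzS, hz⟩ := exists_dist_ne_of_setDist_ne hdist
  refine ⟨z, mem_sdiff.2 ⟨mem_DG.2 hz, fun hzab => hdist ?_⟩, hzS⟩
  have hSA : S = A := by
    rcases mem_insert.1 hzab with rfl | hzb
    · exact P.eq_of_mem_parts hS hA hzS ha
    · exact P.eq_of_mem_parts hS hA hzS (mem_singleton.1 hzb ▸ hb)
  rw [hSA, setDist_eq_zero_of_mem ha, setDist_eq_zero_of_mem hb]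

theorem card_le_card_distinguishingParts {u v : V} {T : Finset V}
    (hT : ∀ z ∈ T, {z} ∈ P.parts) (hTD : T ⊆ DG G u v) :
    #T ≤ #(distinguishingParts G P u v) := by
  refine card_le_card_of_injOn singleton (fun z hz => mem_filter.2 ⟨hT z hz, ?_⟩)
    singleton_injective.injOn
  rw [setDist_singleton, setDist_singleton, dist_comm, dist_comm (u := v)]
  exact mem_DG.1 (hTD hz)

/-- The singleton part `{u}` and the part of `v` both distinguish `u` from `v`. -/
theorem two_le_card_distinguishingParts (hG : G.Connected) {u v : V} (huv : u ≠ v)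
    (hu : {u} ∈ P.parts) : 2 ≤ #(distinguishingParts G P u v) := by
  have hv : v ∈ P.part v := P.mem_part (mem_univ v)
  have hne : {u} ≠ P.part v := fun h => huv (mem_singleton.1 (h ▸ hv)).symm
  rw [← card_pair hne]
  refine card_le_card (insert_subset (mem_filter.2 ⟨hu, ?_⟩)
    (singleton_subset_iff.2 (mem_filter.2 ⟨P.part_mem.2 (mem_univ v), ?_⟩)))
  · exact setDist_ne_of_mem_of_notMem hG (mem_singleton_self u) (by simpa using huv.symm)
  · exact (setDist_ne_of_mem_of_notMem hG hv fun hu' =>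
      hne (P.eq_of_mem_parts hu (P.part_mem.2 (mem_univ v)) (mem_singleton_self u) hu')).symm

theorem isKPartitionGenerator_bot (hk : k ≤ frakd G) :
    IsKPartitionGenerator G k (⊥ : Finpartition (univ : Finset V)) := fun _ _ huv =>
  (hk.trans (frakd_le_card_DG huv)).trans <| card_le_card_distinguishingParts
    (fun z _ => Finpartition.mem_bot_iff.2 ⟨z, mem_univ z, rfl⟩) subset_rfl

theorem card_parts_eq_of_frakdStar_le (hG : G.Connected) (hk : 1 ≤ k)
    (hstar : frakdStar G ≤ k + 1) (hP : IsKPartitionGenerator G k P) :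
    #P.parts = Fintype.card V := by
  refine P.card_parts_eq_of_forall_card_le_one fun A hA => card_le_one.2 fun a ha b hb => ?_
  by_contra hab
  have h₁ : k ≤ #(distinguishingParts G P a b) := hP a b hab
  have h₂ := card_distinguishingParts_le hG hA hab ha hb
  have h₃ := card_DG_le_frakdStar (G := G) hab
  omega

/-- The pair `x, y` is distinguished by the singletons `{z}`, `z ∈ 𝒟(x, y) \ {x, y}`; every other
pair meets a singleton part, so `two_le_card_distinguishingParts` applies. -/
theorem isKPartitionGenerator_blockAndSingletons_pair (hG : G.Connected) (hk : k ≤ 2)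
    {x y : V} (hxy : x ≠ y) (hcard : k + 2 ≤ #(DG G x y)) :
    IsKPartitionGenerator G k (Finpartition.blockAndSingletons {x, y} (insert_nonempty x {y})) := by
  set P := Finpartition.blockAndSingletons {x, y} (insert_nonempty x {y})
  have hxy_parts : k ≤ #(distinguishingParts G P x y) := by
    refine le_trans ?_ (card_le_card_distinguishingParts (T := DG G x y \ {x, y})
      (fun z hz => Finpartition.singleton_mem_blockAndSingletons (mem_sdiff.1 hz).2) sdiff_subset)
    rw [card_sdiff_of_subset (pair_subset_DG hG hxy), card_pair hxy]
    omega
  refine isKPartitionGenerator_iff.2 fun u v huv => ?_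
  by_cases hu : u ∈ ({x, y} : Finset V)
  · by_cases hv : v ∈ ({x, y} : Finset V)
    · simp only [mem_insert, mem_singleton] at hu hv
      rcases hu with rfl | rfl <;> rcases hv with rfl | rfl
      · exact absurd rfl huv
      · exact hxy_parts
      · rwa [distinguishingParts_comm]
      · exact absurd rfl huv
    · rw [← distinguishingParts_comm]
      exact hk.trans (two_le_card_distinguishingParts hG huv.symm
        (Finpartition.singleton_mem_blockAndSingletons hv))
  · exact hk.trans (two_le_card_distinguishingParts hG huv
      (Finpartition.singleton_mem_blockAndSingletons hu))

theorem pd_le_card_parts (hP : IsKPartitionGenerator G k P) : pd G k ≤ #P.parts :=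
  Nat.sInf_le ⟨P, hP, rfl⟩

theorem exists_isKPartitionGenerator_card_eq_pd
    (h : ∃ P : Finpartition (univ : Finset V), IsKPartitionGenerator G k P) :
    ∃ P : Finpartition (univ : Finset V), IsKPartitionGenerator G k P ∧ #P.parts = pd G k :=
  let ⟨P, hP⟩ := h
  Nat.sInf_mem (s := {m | ∃ P, IsKPartitionGenerator G k P ∧ #P.parts = m}) ⟨_, P, hP, rfl⟩

end Graph

theorem stmt_16_general {V : Type*} [Fintype V] [DecidableEq V] (G : SimpleGraph V)
    (hG : G.Connected)
    (k : ℕ) (hk : k = 1 ∨ k = 2) (hk' : k ≤ frakd G) :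
    pd G k = Fintype.card V ↔ frakdStar G ≤ k + 1 := by
  constructor
  · intro hpd
    by_contra! hstar
    obtain ⟨x, y, hxy, hcard⟩ := exists_card_DG_eq_frakdStar (G := G) (by omega)
    have hgen := isKPartitionGenerator_blockAndSingletons_pair (k := k) hG (by omega) hxy (by omega)
    have hpd_le := pd_le_card_parts hgen
    rw [Finpartition.card_blockAndSingletons, card_pair hxy] at hpd_le
    have hn : 2 ≤ Fintype.card V := card_pair hxy ▸ card_le_univ _
    omega
  · intro hstar
    obtain ⟨P, hP, hcard⟩ :=
      exists_isKPartitionGenerator_card_eq_pd ⟨⊥, isKPartitionGenerator_bot hk'⟩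
    rw [← hcard]
    exact card_parts_eq_of_frakdStar_le hG (by omega) hstar hP

theorem stmt_16 {V : Type*} [Fintype V] [DecidableEq V] (G : SimpleGraph V)
    (hG : G.Connected) (hn : 2 ≤ Fintype.card V)
    (k : ℕ) (hk : k = 1 ∨ k = 2) (hk' : k ≤ frakd G) :
    pd G k = Fintype.card V ↔ frakdStar G ≤ k + 1 :=
  stmt_16_general G hG k hk hk'
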